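/- arXiv:math/0212129 — 2 statements merged into one kernel-verified Lean document; each statement's English description precedes it below -/
import Mathlib

section
/- If Λ = {n_i} ⊂ ℤ is a lacunary sequence with parameter R (i.e. for every nonzero integer r, the number of pairs (i,j) with n_i − n_j = r is at most R), and g(x) = Σ c_{n_i} e^{2πi n_i x} is an L²[0,1] function with spectrum in Λ, then ‖g‖_{L⁴[0,1]} ≤ (1+R)^{1/4} ‖g‖_{L²[0,1]}. -/
open MeasureTheory Complex Set
open scoped FourierTransform Real

noncomputable section

/-- A set of integers, given as a sequence `n`, is lacunary with parameter `R` if for every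
nonzero integer `r`, the number of pairs `(i,j)` with `n i - n j = r` is at most `R`. -/
def Lacunary (n : ℤ → ℤ) (R : ℕ) : Prop :=
  ∀ r : ℤ, r ≠ 0 → {p : ℤ × ℤ | n p.1 - n p.2 = r}.Finite ∧
    {p : ℤ × ℤ | n p.1 - n p.2 = r}.ncard ≤ R

/-!
If the coefficients are not absolutely summable, the series defining `g` diverges at every point
(a complex series converges only absolutely), so `g = 0`. Otherwise, grouping the coefficients by
frequency writes `g = ∑ s_v e_v` with `s ∈ ℓ¹(ℤ)` supported in `Λ`. Then
`|g|² = ∑_r E_r e_r` with the autocorrelation `E_r = ∑_v s_v conj (s_{v-r})`, and Parseval applied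
twice gives `‖g‖₂² = ∑_v |s_v|² = E_0` and `‖g‖₄⁴ = ∑_r |E_r|²`. For `r ≠ 0` at most `R` terms of
`E_r` are nonzero, so Cauchy–Schwarz gives `|E_r|² ≤ R ∑_v |s_v|² |s_{v-r}|²`, which sums over
`r` to `R ‖g‖₂⁴`.
-/

open ComplexConjugate

def fourierExp (k : ℤ) (x : ℝ) : ℂ := exp (2 * π * I * k * x)

lemma norm_fourierExp (k : ℤ) (x : ℝ) : ‖fourierExp k x‖ = 1 := by
  rw [fourierExp, norm_exp]
  simp

lemma fourierExp_mul_fourierExp (j k : ℤ) (x : ℝ) :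
    fourierExp j x * fourierExp k x = fourierExp (j + k) x := by
  rw [fourierExp, fourierExp, fourierExp, ← exp_add]
  push_cast
  ring_nf

lemma conj_fourierExp (k : ℤ) (x : ℝ) : conj (fourierExp k x) = fourierExp (-k) x := by
  rw [fourierExp, fourierExp, ← exp_conj]
  simp [map_ofNat]

lemma continuous_fourierExp (k : ℤ) : Continuous (fourierExp k) := by
  unfold fourierExp
  fun_prop

lemma integral_fourierExp (k : ℤ) :
    ∫ x in Icc (0:ℝ) 1, fourierExp k x = if k = 0 then 1 else 0 := by
  rw [integral_Icc_eq_integral_Ioc, ← intervalIntegral.integral_of_le zero_le_one]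
  split_ifs with hk
  · simp [hk, fourierExp]
  · have hc : 2 * π * I * k ≠ 0 := by simp [Real.pi_ne_zero, I_ne_zero, hk]
    simp only [fourierExp]
    rw [integral_exp_mul_complex hc]
    have h1 : 2 * π * I * k * (1:ℝ) = k * (2 * π * I) := by push_cast; ring
    rw [h1, exp_int_mul_two_pi_mul_I]
    simp

section Series

variable {α : Type*} {b : α → ℂ}

lemma summable_norm_of_summable_mul_fourierExp (m : α → ℤ) (x : ℝ)
    (h : Summable fun q => b q * fourierExp (m q) x) : Summable fun q => ‖b q‖ := by
  simpa [norm_fourierExp] using h.norm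

lemma summable_mul_fourierExp (hb : Summable fun q => ‖b q‖) (m : α → ℤ) (x : ℝ) :
    Summable fun q => b q * fourierExp (m q) x :=
  .of_norm (by simpa [norm_fourierExp] using hb)

lemma tsum_mul_fourierExp_eq_tsum_fiber (hb : Summable fun q => ‖b q‖) (m : α → ℤ) (x : ℝ) :
    ∑' q, b q * fourierExp (m q) x = ∑' r, (∑' q : m ⁻¹' {r}, b q) * fourierExp r x := by
  refine ((summable_mul_fourierExp hb m x).hasSum.tsum_fiberwise m).tsum_eq.symm.trans ?_
  refine tsum_congr fun r => ?_
  rw [← tsum_mul_right]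
  refine tsum_congr fun q => ?_
  rw [show m q = r from q.2]

lemma summable_norm_tsum_fiber (hb : Summable fun q => ‖b q‖) (m : α → ℤ) :
    Summable fun r => ‖∑' q : m ⁻¹' {r}, b q‖ :=
  (hb.hasSum.tsum_fiberwise m).summable.of_nonneg_of_le (fun _ => norm_nonneg _)
    fun _ => norm_tsum_le_tsum_norm (hb.subtype _)

end Series

lemma integral_tsum_mul_fourierExp {s : ℤ → ℂ} (hs : Summable fun v => ‖s v‖) :
    ∫ x in Icc (0:ℝ) 1, ∑' v, s v * fourierExp v x = s 0 := by
  have hint : ∀ v, Integrable (fun x => s v * fourierExp v x) (volume.restrict (Icc (0:ℝ) 1)) :=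
    fun v => ((continuous_fourierExp v).const_smul (s v)).continuousOn.integrableOn_compact
      isCompact_Icc
  rw [← integral_tsum_of_summable_integral_norm hint (by simpa [norm_fourierExp] using hs)]
  simp_rw [integral_const_mul, integral_fourierExp, mul_ite, mul_one, mul_zero]
  exact tsum_ite_eq 0 _

lemma HasSum.tsum_fiber_sub {G E : Type*} [AddCommGroup G] [NormedAddCommGroup E]
    [CompleteSpace E] {f : G × G → E} {a : E} (hf : HasSum f a) :
    HasSum (fun r => ∑' v, f (v, v - r)) a := by
  have hshear : HasSum (fun p : G × G => f (p.2, p.2 - p.1)) a :=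
    ((Equiv.prodComm G G).trans (Equiv.prodShear (Equiv.refl G) Equiv.subLeft)).hasSum_iff.mpr hf
  exact hshear.prod_fiberwise fun r => (hshear.summable.prod_factor r).hasSum

def autocorr (s : ℤ → ℂ) (r : ℤ) : ℂ := ∑' v, s v * conj (s (v - r))

section Autocorrelation

variable {s : ℤ → ℂ}

lemma autocorr_zero : autocorr s 0 = ((∑' v, ‖s v‖ ^ 2 : ℝ) : ℂ) := by
  simp_rw [autocorr, sub_zero, mul_conj, normSq_eq_norm_sq, ofReal_tsum]

lemma ofReal_norm_sq_tsum_mul_fourierExp (hs : Summable fun v => ‖s v‖) (x : ℝ) :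
    ((‖∑' v, s v * fourierExp v x‖ ^ 2 : ℝ) : ℂ) = ∑' r, autocorr s r * fourierExp r x := by
  have hterm : Summable fun v => ‖s v * fourierExp v x‖ := by simpa [norm_fourierExp] using hs
  have hconj : Summable fun w => ‖conj (s w) * fourierExp (-w) x‖ := by
    simpa [norm_fourierExp] using hs
  have hprod := summable_mul_of_summable_norm hterm hconj
  rw [← normSq_eq_norm_sq, ← mul_conj, conj_tsum]
  simp_rw [map_mul, conj_fourierExp]
  rw [tsum_mul_tsum_of_summable_norm hterm hconj,
    ← hprod.hasSum.tsum_fiber_sub.tsum_eq]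
  refine tsum_congr fun r => ?_
  rw [autocorr, ← tsum_mul_right]
  refine tsum_congr fun v => ?_
  rw [mul_mul_mul_comm, fourierExp_mul_fourierExp]
  ring_nf

lemma summable_norm_autocorr (hs : Summable fun v => ‖s v‖) : Summable fun r => ‖autocorr s r‖ := by
  have hprod := summable_mul_of_summable_norm (f := fun v => ‖s v‖) (g := fun w => ‖s w‖)
    (by simpa using hs) (by simpa using hs)
  refine hprod.hasSum.tsum_fiber_sub.summable.of_nonneg_of_le (fun _ => norm_nonneg _) fun r => ?_
  refine (norm_tsum_le_tsum_norm ?_).trans_eq (tsum_congr fun v => ?_)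
  · simp only [norm_mul, RCLike.norm_conj]
    exact hprod.comp_injective (i := fun v => (v, v - r)) fun _ _ h => (Prod.ext_iff.mp h).1
  · simp

theorem integral_norm_sq_tsum_mul_fourierExp (hs : Summable fun v => ‖s v‖) :
    ∫ x in Icc (0:ℝ) 1, ‖∑' v, s v * fourierExp v x‖ ^ 2 = ∑' v, ‖s v‖ ^ 2 := by
  apply ofReal_injective
  rw [← integral_complex_ofReal]
  simp_rw [ofReal_norm_sq_tsum_mul_fourierExp hs]
  rw [integral_tsum_mul_fourierExp (summable_norm_autocorr hs), autocorr_zero]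

theorem integral_norm_pow_four_tsum_mul_fourierExp (hs : Summable fun v => ‖s v‖) :
    ∫ x in Icc (0:ℝ) 1, ‖∑' v, s v * fourierExp v x‖ ^ 4 = ∑' r, ‖autocorr s r‖ ^ 2 := by
  have hsq (x : ℝ) : ‖∑' v, s v * fourierExp v x‖ ^ 4
      = ‖∑' r, autocorr s r * fourierExp r x‖ ^ 2 := by
    rw [← ofReal_norm_sq_tsum_mul_fourierExp hs, norm_real, Real.norm_of_nonneg (by positivity)]
    ring
  simp_rw [hsq]
  exact integral_norm_sq_tsum_mul_fourierExp (summable_norm_autocorr hs)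

end Autocorrelation

def LacunarySupport (s : ℤ → ℂ) (R : ℕ) : Prop :=
  ∀ r : ℤ, r ≠ 0 → {v | s v ≠ 0 ∧ s (v - r) ≠ 0}.Finite ∧
    {v | s v ≠ 0 ∧ s (v - r) ≠ 0}.ncard ≤ R

lemma norm_autocorr_sq_le {s : ℤ → ℂ} {r : ℤ} {R : ℕ}
    (hfin : {v | s v ≠ 0 ∧ s (v - r) ≠ 0}.Finite) (hcard : {v | s v ≠ 0 ∧ s (v - r) ≠ 0}.ncard ≤ R)
    (hsum : Summable fun v => ‖s v‖ ^ 2 * ‖s (v - r)‖ ^ 2) :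
    ‖autocorr s r‖ ^ 2 ≤ R * ∑' v, ‖s v‖ ^ 2 * ‖s (v - r)‖ ^ 2 := by
  set F := hfin.toFinset
  have hF : autocorr s r = ∑ v ∈ F, s v * conj (s (v - r)) := by
    refine tsum_eq_sum fun v hv => ?_
    rw [Finite.mem_toFinset, mem_ofPred, not_and_or, not_not, not_not] at hv
    rcases hv with hv | hv <;> simp [hv]
  have hFR : (F.card : ℝ) ≤ R := by
    rw [ncard_eq_toFinset_card _ hfin] at hcard
    exact_mod_cast hcard
  calc ‖autocorr s r‖ ^ 2 ≤ (∑ v ∈ F, ‖s v‖ * ‖s (v - r)‖) ^ 2 := by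
        rw [hF]
        gcongr
        exact (norm_sum_le _ _).trans_eq (by simp)
    _ ≤ F.card * ∑ v ∈ F, (‖s v‖ * ‖s (v - r)‖) ^ 2 := sq_sum_le_card_mul_sum_sq
    _ ≤ R * ∑' v, ‖s v‖ ^ 2 * ‖s (v - r)‖ ^ 2 := by
        simp_rw [mul_pow]
        gcongr
        exact hsum.sum_le_tsum _ fun _ _ => by positivity

theorem tsum_norm_autocorr_sq_le {s : ℤ → ℂ} {R : ℕ} (hs : Summable fun v => ‖s v‖)
    (hR : LacunarySupport s R) :
    ∑' r, ‖autocorr s r‖ ^ 2 ≤ (1 + R) * (∑' v, ‖s v‖ ^ 2) ^ 2 := by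
  set B := ∑' v, ‖s v‖ ^ 2
  have hs2 : Summable fun v => ‖s v‖ ^ 2 :=
    (hs.mul_left (∑' v, ‖s v‖)).of_nonneg_of_le (fun _ => by positivity) fun v => by
      rw [sq]
      exact mul_le_mul_of_nonneg_right (hs.le_tsum v fun _ _ => norm_nonneg _) (norm_nonneg _)
  have hprod : HasSum (fun p : ℤ × ℤ => ‖s p.1‖ ^ 2 * ‖s p.2‖ ^ 2) (B * B) :=
    hs2.hasSum.mul hs2.hasSum
      (hs2.mul_of_nonneg hs2 (fun _ => by positivity) fun _ => by positivity)
  have hinner (r : ℤ) : Summable fun v => ‖s v‖ ^ 2 * ‖s (v - r)‖ ^ 2 :=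
    hprod.summable.comp_injective (i := fun v => (v, v - r)) fun _ _ h => (Prod.ext_iff.mp h).1
  have hbound (r : ℤ) : ‖autocorr s r‖ ^ 2
      ≤ (if r = 0 then B ^ 2 else 0) + R * ∑' v, ‖s v‖ ^ 2 * ‖s (v - r)‖ ^ 2 := by
    split_ifs with hr
    · rw [hr, autocorr_zero, norm_real, Real.norm_of_nonneg (by positivity)]
      exact le_add_of_nonneg_right (by positivity)
    · rw [zero_add]
      exact norm_autocorr_sq_le (hR r hr).1 (hR r hr).2 (hinner r)
  have hrhs := (hasSum_ite_eq (0 : ℤ) (B ^ 2)).add (hprod.tsum_fiber_sub.mul_left (R : ℝ))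
  have hlhs := hrhs.summable.of_nonneg_of_le (fun _ => by positivity) hbound
  calc ∑' r, ‖autocorr s r‖ ^ 2 ≤ B ^ 2 + R * (B * B) := hasSum_le hbound hlhs.hasSum hrhs
    _ = (1 + R) * B ^ 2 := by ring

lemma Lacunary.lacunarySupport {n : ℤ → ℤ} {R : ℕ} (hlac : Lacunary n R) {s : ℤ → ℂ}
    (hs : ∀ v, s v ≠ 0 → v ∈ range n) : LacunarySupport s R := by
  intro r hr
  obtain ⟨hfin, hcard⟩ := hlac r hr
  have hsub : {v | s v ≠ 0 ∧ s (v - r) ≠ 0} ⊆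
      (fun p : ℤ × ℤ => n p.1) '' {p | n p.1 - n p.2 = r} := by
    rintro v ⟨hv, hvr⟩
    obtain ⟨i, rfl⟩ := hs v hv
    obtain ⟨j, hj⟩ := hs _ hvr
    exact ⟨(i, j), by simp [hj], rfl⟩
  exact ⟨(hfin.image _).subset hsub,
    (ncard_le_ncard hsub (hfin.image _)).trans ((ncard_image_le hfin).trans hcard)⟩

lemma rpow_quarter_le_of_le_mul_sq {a b C : ℝ} (ha : 0 ≤ a) (hb : 0 ≤ b) (hC : 0 ≤ C)
    (h : a ≤ C * b ^ 2) : a ^ (1 / 4 : ℝ) ≤ C ^ (1 / 4 : ℝ) * b ^ (1 / 2 : ℝ) := by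
  calc a ^ (1 / 4 : ℝ) ≤ (C * b ^ 2) ^ (1 / 4 : ℝ) := by gcongr
    _ = C ^ (1 / 4 : ℝ) * b ^ (1 / 2 : ℝ) := by
      rw [Real.mul_rpow hC (by positivity), ← Real.rpow_natCast, ← Real.rpow_mul hb]
      norm_num

theorem stmt0_general (n : ℤ → ℤ) (R : ℕ) (hlac : Lacunary n R)
    (c : ℤ → ℂ)
    (g : ℝ → ℂ)
    (hg : ∀ x : ℝ, g x = ∑' i : ℤ, c i * Complex.exp (2 * π * I * (n i) * x)) :
    (∫ x in Set.Icc (0:ℝ) 1, ‖g x‖ ^ 4) ^ ((1:ℝ)/4) ≤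
      ((1 + R : ℝ)) ^ ((1:ℝ)/4) * (∫ x in Set.Icc (0:ℝ) 1, ‖g x‖ ^ 2) ^ ((1:ℝ)/2) := by
  by_cases hc : Summable fun i => ‖c i‖
  swap
  · have hg0 : g = 0 := funext fun x => (hg x).trans <| tsum_eq_zero_of_not_summable
      (mt (summable_norm_of_summable_mul_fourierExp n x) hc)
    simp [hg0]
  set s : ℤ → ℂ := fun v => ∑' i : n ⁻¹' {v}, c i
  have hs : Summable fun v => ‖s v‖ := summable_norm_tsum_fiber hc n
  have hgs : g = fun x => ∑' v, s v * fourierExp v x :=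
    funext fun x => (hg x).trans (tsum_mul_fourierExp_eq_tsum_fiber hc n x)
  have hsupp : LacunarySupport s R := hlac.lacunarySupport fun v hv => by
    by_contra hv'
    simp [s, preimage_singleton_eq_empty.mpr hv'] at hv
  rw [hgs, integral_norm_sq_tsum_mul_fourierExp hs, integral_norm_pow_four_tsum_mul_fourierExp hs]
  exact rpow_quarter_le_of_le_mul_sq (by positivity) (by positivity) (by positivity)
    (tsum_norm_autocorr_sq_le hs hsupp)

/-- If the spectrum of `g ∈ L²[0,1]` lies in a lacunary set with parameter `R`, then
`‖g‖₄ ≤ (1+R)^{1/4} ‖g‖₂`. -/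
theorem stmt0 (n : ℤ → ℤ) (R : ℕ) (hlac : Lacunary n R)
    (c : ℤ → ℂ) (hc : Summable fun i => ‖c i‖ ^ 2)
    (g : ℝ → ℂ)
    (hg : ∀ x : ℝ, g x = ∑' i : ℤ, c i * Complex.exp (2 * π * I * (n i) * x)) :
    (∫ x in Set.Icc (0:ℝ) 1, ‖g x‖ ^ 4) ^ ((1:ℝ)/4) ≤
      ((1 + R : ℝ)) ^ ((1:ℝ)/4) * (∫ x in Set.Icc (0:ℝ) 1, ‖g x‖ ^ 2) ^ ((1:ℝ)/2) :=
  stmt0_general n R hlac c g hg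
end
end

section
/- There is an absolute constant C such that for all integers k ≠ l, Σ_{n ∈ ℤ} 1/((1 + (n+k)²)(1 + (n+l)²)) ≤ C / (k − l)². -/
/-!
Writing `a = m + k` and `b = m + l`, we have `a - b = k - l` for every `m`, and
`(a - b)² ≤ 2 (a² + b²) ≤ 2 ((1 + a²) + (1 + b²))`. Dividing by `(1 + a²)(1 + b²)` bounds
`(k - l)²` times the `m`-th term by `2 (1/(1 + a²) + 1/(1 + b²))`, and summing over `m` gives
`(k - l)² Σ ≤ 4 Σₙ 1/(1 + n²)`, a finite constant.
-/

lemma summable_one_div_one_add_sq_int : Summable fun n : ℤ => 1 / (1 + (n : ℝ) ^ 2) := by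
  refine (Real.summable_one_div_int_pow.mpr one_lt_two).of_norm_bounded_eventually ?_
  filter_upwards [Filter.eventually_cofinite_ne 0] with n hn
  have hn2 : (0 : ℝ) < (n : ℝ) ^ 2 := by positivity
  rw [Real.norm_of_nonneg (by positivity)]
  exact one_div_le_one_div_of_le hn2 (by linarith)

lemma summable_one_div_one_add_sq_int_add (k : ℤ) :
    Summable fun n : ℤ => 1 / (1 + ((n : ℝ) + k) ^ 2) := by
  exact_mod_cast (Equiv.addRight k).summable_iff.mpr summable_one_div_one_add_sq_int

lemma tsum_one_div_one_add_sq_int_add (k : ℤ) :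
    ∑' n : ℤ, 1 / (1 + ((n : ℝ) + k) ^ 2) = ∑' n : ℤ, 1 / (1 + (n : ℝ) ^ 2) := by
  rw [← (Equiv.addRight k).tsum_eq fun n : ℤ => 1 / (1 + (n : ℝ) ^ 2)]
  simp

lemma sq_sub_mul_one_div_le (a b : ℝ) :
    (a - b) ^ 2 * (1 / ((1 + a ^ 2) * (1 + b ^ 2))) ≤
      2 * (1 / (1 + a ^ 2) + 1 / (1 + b ^ 2)) := by
  have hsq : (a - b) ^ 2 ≤ 2 * ((1 + b ^ 2) + (1 + a ^ 2)) := by nlinarith [sq_nonneg (a + b)]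
  rw [div_add_div _ _ (by positivity) (by positivity), mul_one_div, ← mul_div_assoc]
  gcongr
  linarith

/-- There is an absolute constant `C` such that for distinct integers `k ≠ l`,
`Σ_{n ∈ ℤ} 1/((1+(n+k)²)(1+(n+l)²)) ≤ C/(k-l)²`. -/
theorem stmt3 :
    ∃ C : ℝ, 0 < C ∧ ∀ k l : ℤ, k ≠ l →
      (∑' m : ℤ, 1 / ((1 + ((m:ℝ) + k) ^ 2) * (1 + ((m:ℝ) + l) ^ 2))) ≤
        C / ((k:ℝ) - l) ^ 2 := by
  set S := ∑' n : ℤ, 1 / (1 + (n : ℝ) ^ 2)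
  have hS : 0 < S := summable_one_div_one_add_sq_int.tsum_pos (fun n => by positivity) 0 (by simp)
  refine ⟨4 * S, by positivity, fun k l hkl => ?_⟩
  have hkl' : (k : ℝ) - l ≠ 0 := sub_ne_zero.mpr (Int.cast_injective.ne hkl)
  have hbound (m : ℤ) := sq_sub_mul_one_div_le ((m : ℝ) + k) ((m : ℝ) + l)
  simp only [add_sub_add_left_eq_sub] at hbound
  have hsum := ((summable_one_div_one_add_sq_int_add k).add
    (summable_one_div_one_add_sq_int_add l)).mul_left 2
  rw [le_div_iff₀ (by positivity), mul_comm, ← tsum_mul_left]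
  calc _ ≤ ∑' m : ℤ, 2 * (1 / (1 + ((m : ℝ) + k) ^ 2) + 1 / (1 + ((m : ℝ) + l) ^ 2)) :=
        (hsum.of_nonneg_of_le (fun m => by positivity) hbound).tsum_le_tsum hbound hsum
    _ = 4 * S := by
        rw [tsum_mul_left, (summable_one_div_one_add_sq_int_add k).tsum_add
          (summable_one_div_one_add_sq_int_add l), tsum_one_div_one_add_sq_int_add,
          tsum_one_div_one_add_sq_int_add]
        ring
end
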